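/- Let K be a pyramid in ℝ³ with vertices v₁,…,v₅ where v₁,v₂,v₃,v₄ form a parallelogram (v₁−v₂+v₃−v₄=0), split into tetrahedra T₁ = conv{v₃,v₁,v₂,v₅} and T₂ = conv{v₁,v₃,v₄,v₅} (both nondegenerate). Define the five piecewise quadratic functions φ₁,…,φ₅ by: φ₁ = λ₂^{T₁} − λ₁^{T₁}λ₂^{T₁} on T₁ and λ₁^{T₂} − λ₁^{T₂}λ₂^{T₂} on T₂; φ₂ = λ₃^{T₁} + λ₁^{T₁}λ₂^{T₁} on T₁ and λ₁^{T₂}λ₂^{T₂} on T₂; φ₃ = λ₁^{T₁} − λ₁^{T₁}λ₂^{T₁} on T₁ and λ₂^{T₂} − λ₁^{T₂}λ₂^{T₂} on T₂; φ₄ = λ₁^{T₁}λ₂^{T₁} on T₁ and λ₃^{T₂} + λ₁^{T₂}λ₂^{T₂} on T₂; φ₅ = λ₄^{T₁} on T₁ and λ₄^{T₂} on T₂. Then the two piecewise definitions of each φᵢ agree on the common interface triangle conv{v₁,v₃,v₅} (so each φᵢ is continuous on K), and φᵢ(vⱼ)=δᵢⱼ for 1≤i,j≤5. -/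
import Mathlib


open Matrix

theorem aff_two {f : (Fin 3 → ℝ) → ℝ} (h : ∃ (a : ℝ) (b : Fin 3 → ℝ), ∀ x, f x = a + b ⬝ᵥ x)
    (x y : Fin 3 → ℝ) {p q : ℝ} (hpq : p + q = 1) :
    f (p • x + q • y) = p * f x + q * f y := by
  obtain ⟨a, b, hab⟩ := h
  simp only [hab, dotProduct_add, dotProduct_smul, smul_eq_mul]
  linear_combination (-a) * hpq

theorem aff_sub {f : (Fin 3 → ℝ) → ℝ} (h : ∃ (a : ℝ) (b : Fin 3 → ℝ), ∀ x, f x = a + b ⬝ᵥ x)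
    (x y z : Fin 3 → ℝ) :
    f (x - y + z) = f x - f y + f z := by
  obtain ⟨a, b, hab⟩ := h
  simp only [hab, dotProduct_add, dotProduct_sub]
  ring

theorem stmt5 (v : Fin 5 → Fin 3 → ℝ)
    (hpar : v 0 - v 1 + v 2 - v 3 = 0)
    (T1v T2v : Fin 4 → Fin 3 → ℝ)
    (hT1v : T1v = ![v 2, v 0, v 1, v 4]) (hT2v : T2v = ![v 0, v 2, v 3, v 4])
    (hnd1 : AffineIndependent ℝ T1v) (hnd2 : AffineIndependent ℝ T2v)
    -- barycentric coordinates of the two sub-tetrahedra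
    (lam1 lam2 : Fin 4 → (Fin 3 → ℝ) → ℝ)
    (haff1 : ∀ i, ∃ (a : ℝ) (b : Fin 3 → ℝ), ∀ x, lam1 i x = a + b ⬝ᵥ x)
    (haff2 : ∀ i, ∃ (a : ℝ) (b : Fin 3 → ℝ), ∀ x, lam2 i x = a + b ⬝ᵥ x)
    (hv1 : ∀ i j, lam1 i (T1v j) = if i = j then 1 else 0)
    (hv2 : ∀ i j, lam2 i (T2v j) = if i = j then 1 else 0)
    -- the two polynomial pieces of the five composite basis functions
    (phiT1 phiT2 : Fin 5 → (Fin 3 → ℝ) → ℝ)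
    (hphi1 : phiT1 =
      ![fun x => lam1 1 x - lam1 0 x * lam1 1 x,
        fun x => lam1 2 x + lam1 0 x * lam1 1 x,
        fun x => lam1 0 x - lam1 0 x * lam1 1 x,
        fun x => lam1 0 x * lam1 1 x,
        fun x => lam1 3 x])
    (hphi2 : phiT2 =
      ![fun x => lam2 0 x - lam2 0 x * lam2 1 x,
        fun x => lam2 0 x * lam2 1 x,
        fun x => lam2 1 x - lam2 0 x * lam2 1 x,
        fun x => lam2 2 x + lam2 0 x * lam2 1 x,
        fun x => lam2 3 x]) :
    -- the two pieces agree on the interface triangle conv{v₁, v₃, v₅}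
    (∀ i, ∀ x ∈ convexHull ℝ {v 0, v 2, v 4}, phiT1 i x = phiT2 i x) ∧
    -- nodal (delta) property at the five vertices of the pyramid
    (∀ i j, v j ∈ convexHull ℝ (Set.range T1v) →
      phiT1 i (v j) = if i = j then 1 else 0) ∧
    (∀ i j, v j ∈ convexHull ℝ (Set.range T2v) →
      phiT2 i (v j) = if i = j then 1 else 0) := by
  have hj5 : ∀ j : Fin 5, j = 0 ∨ j = 1 ∨ j = 2 ∨ j = 3 ∨ j = 4 := by decide
  -- evaluation lemmas for phi pieces
  have p10 : ∀ y, phiT1 0 y = lam1 1 y - lam1 0 y * lam1 1 y := fun y => by simp only [hphi1]; rfl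
  have p11 : ∀ y, phiT1 1 y = lam1 2 y + lam1 0 y * lam1 1 y := fun y => by simp only [hphi1]; rfl
  have p12 : ∀ y, phiT1 2 y = lam1 0 y - lam1 0 y * lam1 1 y := fun y => by simp only [hphi1]; rfl
  have p13 : ∀ y, phiT1 3 y = lam1 0 y * lam1 1 y := fun y => by simp only [hphi1]; rfl
  have p14 : ∀ y, phiT1 4 y = lam1 3 y := fun y => by simp only [hphi1]; rfl
  have p20 : ∀ y, phiT2 0 y = lam2 0 y - lam2 0 y * lam2 1 y := fun y => by simp only [hphi2]; rfl
  have p21 : ∀ y, phiT2 1 y = lam2 0 y * lam2 1 y := fun y => by simp only [hphi2]; rfl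
  have p22 : ∀ y, phiT2 2 y = lam2 1 y - lam2 0 y * lam2 1 y := fun y => by simp only [hphi2]; rfl
  have p23 : ∀ y, phiT2 3 y = lam2 2 y + lam2 0 y * lam2 1 y := fun y => by simp only [hphi2]; rfl
  have p24 : ∀ y, phiT2 4 y = lam2 3 y := fun y => by simp only [hphi2]; rfl
  -- values of barycentric coordinates at vertices
  have L0 : ∀ i, lam1 i (v 0) = if i = 1 then 1 else 0 := fun i => by
    simpa [hT1v] using hv1 i 1
  have L1 : ∀ i, lam1 i (v 1) = if i = 2 then 1 else 0 := fun i => by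
    simpa [hT1v] using hv1 i 2
  have L2 : ∀ i, lam1 i (v 2) = if i = 0 then 1 else 0 := fun i => by
    simpa [hT1v] using hv1 i 0
  have L4 : ∀ i, lam1 i (v 4) = if i = 3 then 1 else 0 := fun i => by
    simpa [hT1v] using hv1 i 3
  have M0 : ∀ i, lam2 i (v 0) = if i = 0 then 1 else 0 := fun i => by
    simpa [hT2v] using hv2 i 0
  have M2 : ∀ i, lam2 i (v 2) = if i = 1 then 1 else 0 := fun i => by
    simpa [hT2v] using hv2 i 1
  have M3 : ∀ i, lam2 i (v 3) = if i = 2 then 1 else 0 := fun i => by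
    simpa [hT2v] using hv2 i 2
  have M4 : ∀ i, lam2 i (v 4) = if i = 3 then 1 else 0 := fun i => by
    simpa [hT2v] using hv2 i 3
  have hv3 : v 3 = v 0 - v 1 + v 2 := (sub_eq_zero.mp hpar).symm
  have hv1' : v 1 = v 0 - v 3 + v 2 := by rw [hv3]; abel
  -- the interface relations hold on the triangle
  have key : ∀ x ∈ convexHull ℝ ({v 0, v 2, v 4} : Set (Fin 3 → ℝ)),
      lam1 0 x = lam2 1 x ∧ lam1 1 x = lam2 0 x ∧ lam1 2 x = 0 ∧
        lam1 3 x = lam2 3 x ∧ lam2 2 x = 0 := by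
    intro x hx
    have hsub : ({v 0, v 2, v 4} : Set (Fin 3 → ℝ)) ⊆
        {x | lam1 0 x = lam2 1 x ∧ lam1 1 x = lam2 0 x ∧ lam1 2 x = 0 ∧
          lam1 3 x = lam2 3 x ∧ lam2 2 x = 0} := by
      rintro y (rfl | rfl | rfl) <;>
        simp [Set.mem_setOf_eq, L0, L1, L2, L4, M0, M2, M3, M4]
    have hconv : Convex ℝ {x | lam1 0 x = lam2 1 x ∧ lam1 1 x = lam2 0 x ∧ lam1 2 x = 0 ∧
        lam1 3 x = lam2 3 x ∧ lam2 2 x = 0} := by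
      rintro y ⟨h1, h2, h3, h4, h5⟩ z ⟨k1, k2, k3, k4, k5⟩ p q hp hq hpq
      refine ⟨?_, ?_, ?_, ?_, ?_⟩
      · rw [aff_two (haff1 0) y z hpq, aff_two (haff2 1) y z hpq, h1, k1]
      · rw [aff_two (haff1 1) y z hpq, aff_two (haff2 0) y z hpq, h2, k2]
      · rw [aff_two (haff1 2) y z hpq, h3, k3]; ring
      · rw [aff_two (haff1 3) y z hpq, aff_two (haff2 3) y z hpq, h4, k4]
      · rw [aff_two (haff2 2) y z hpq, h5, k5]; ring
    exact convexHull_min hsub hconv hx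
  -- nonnegativity of a barycentric coordinate on the convex hulls
  have pos1 : convexHull ℝ (Set.range T1v) ⊆ {x | 0 ≤ lam1 2 x} := by
    refine convexHull_min ?_ ?_
    · rintro y ⟨j, rfl⟩
      show (0:ℝ) ≤ lam1 2 (T1v j)
      rw [hv1 2 j]; split <;> norm_num
    · rintro y hy z hz p q hp hq hpq
      show (0:ℝ) ≤ lam1 2 (p • y + q • z)
      rw [aff_two (haff1 2) y z hpq]
      exact add_nonneg (mul_nonneg hp hy) (mul_nonneg hq hz)
  have pos2 : convexHull ℝ (Set.range T2v) ⊆ {x | 0 ≤ lam2 2 x} := by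
    refine convexHull_min ?_ ?_
    · rintro y ⟨j, rfl⟩
      show (0:ℝ) ≤ lam2 2 (T2v j)
      rw [hv2 2 j]; split <;> norm_num
    · rintro y hy z hz p q hp hq hpq
      show (0:ℝ) ≤ lam2 2 (p • y + q • z)
      rw [aff_two (haff2 2) y z hpq]
      exact add_nonneg (mul_nonneg hp hy) (mul_nonneg hq hz)
  refine ⟨?_, ?_, ?_⟩
  · intro i x hx
    obtain ⟨h1, h2, h3, h4, h5⟩ := key x hx
    rcases hj5 i with rfl | rfl | rfl | rfl | rfl
    · rw [p10, p20, h1, h2]; ring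
    · rw [p11, p21, h3, h1, h2]; ring
    · rw [p12, p22, h1, h2]; ring
    · rw [p13, p23, h5, h1, h2]; ring
    · rw [p14, p24, h4]
  · intro i j hj
    rcases hj5 j with rfl | rfl | rfl | rfl | rfl
    · rcases hj5 i with rfl | rfl | rfl | rfl | rfl <;>
        simp [p10, p11, p12, p13, p14, L0]
    · rcases hj5 i with rfl | rfl | rfl | rfl | rfl <;>
        simp [p10, p11, p12, p13, p14, L1]
    · rcases hj5 i with rfl | rfl | rfl | rfl | rfl <;>
        simp [p10, p11, p12, p13, p14, L2]
    · exfalso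
      have h : (0:ℝ) ≤ lam1 2 (v 3) := pos1 hj
      rw [hv3, aff_sub (haff1 2)] at h
      rw [L0 2, L1 2, L2 2] at h
      simp at h
      linarith
    · rcases hj5 i with rfl | rfl | rfl | rfl | rfl <;>
        simp [p10, p11, p12, p13, p14, L4]
  · intro i j hj
    rcases hj5 j with rfl | rfl | rfl | rfl | rfl
    · rcases hj5 i with rfl | rfl | rfl | rfl | rfl <;>
        simp [p20, p21, p22, p23, p24, M0]
    · exfalso
      have h : (0:ℝ) ≤ lam2 2 (v 1) := pos2 hj
      rw [hv1', aff_sub (haff2 2)] at h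
      rw [M0 2, M3 2, M2 2] at h
      simp at h
      linarith
    · rcases hj5 i with rfl | rfl | rfl | rfl | rfl <;>
        simp [p20, p21, p22, p23, p24, M2]
    · rcases hj5 i with rfl | rfl | rfl | rfl | rfl <;>
        simp [p20, p21, p22, p23, p24, M3]
    · rcases hj5 i with rfl | rfl | rfl | rfl | rfl <;>
        simp [p20, p21, p22, p23, p24, M4]
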